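/- Let k be a field of characteristic p > 0 and G a finite group. Let w be a finite-dimensional kG-module possessing a direct summand u whose k-dimension is prime to p. Then every kG-module X is w-projective, i.e. every kG-module is a direct summand of w ⊗_k Y (with diagonal G-action) for some kG-module Y. -/

import Mathlib

open CategoryTheory MonoidalCategory Limits

/-- `X` is `w`-projective: `X` is a direct summand of `w ⊗ Y` (diagonal `G`-action)
for some `kG`-module `Y`. -/
def IsRelProjective {k G : Type} [Field k] [Group G] (w X : Rep k G) : Prop :=
  ∃ (Y : Rep k G) (i : X ⟶ w ⊗ Y) (r : w ⊗ Y ⟶ X), i ≫ r = 𝟙 X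

/-!
Coevaluation `k → u ⊗ u*` followed by contraction `u ⊗ u* → k` is multiplication by `dim u`,
and both maps are `G`-equivariant. When `dim u` is invertible in `k`, the trivial module is
therefore a retract of `u ⊗ u*`; tensoring with `X` makes `X` a retract of `u ⊗ (u* ⊗ X)`, and
the retraction `u → w → u` turns this into a retraction through `w ⊗ (u* ⊗ X)`.
-/

open TensorProduct

section Coevaluation

variable (K V : Type*) [Field K] [AddCommGroup V] [Module K V] [FiniteDimensional K V]

theorem dualTensorHom_comm_coevaluation_one :
    dualTensorHom K V V (TensorProduct.comm K V (Module.Dual K V) (coevaluation K V 1)) =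
      LinearMap.id := by
  ext x
  simpa [coevaluation_apply_one, map_sum] using (Module.Basis.ofVectorSpace K V).sum_repr x

theorem contractRight_coevaluation_one :
    contractRight K V (coevaluation K V 1) = Module.finrank K V := by
  have contractRight_eq (t : V ⊗[K] Module.Dual K V) :
      contractRight K V t = contractLeft K V (TensorProduct.comm K _ _ t) := by
    induction t using TensorProduct.induction_on with
    | zero => simp
    | tmul v f => simp
    | add s t hs ht => simp [hs, ht]
  rw [contractRight_eq, ← LinearMap.trace_eq_contract_apply, dualTensorHom_comm_coevaluation_one,
    LinearMap.trace_id]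

end Coevaluation

namespace Representation

variable {k G V : Type*} [Field k] [Group G] [AddCommGroup V] [Module k V]

theorem dualTensorHom_comm_tprod_dual (ρ : Representation k G V) (g : G)
    (t : V ⊗[k] Module.Dual k V) :
    dualTensorHom k V V (_root_.TensorProduct.comm k _ _ (ρ.tprod ρ.dual g t)) =
      ρ g ∘ₗ dualTensorHom k V V (_root_.TensorProduct.comm k _ _ t) ∘ₗ ρ g⁻¹ := by
  induction t using TensorProduct.induction_on with
  | zero => simp
  | tmul v f => ext; simp [tprod_apply, Module.Dual.transpose_apply]
  | add s t hs ht => simp only [map_add, hs, ht, LinearMap.add_comp, LinearMap.comp_add]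

/-- Under `V ⊗ V* ≃ End V` the coevaluation is the identity, which conjugation by `ρ g` fixes. -/
theorem tprod_dual_apply_coevaluation_one [FiniteDimensional k V] (ρ : Representation k G V)
    (g : G) : ρ.tprod ρ.dual g (coevaluation k V 1) = coevaluation k V 1 := by
  apply (dualTensorHomEquiv k V V).injective.comp (_root_.TensorProduct.comm k _ _).injective
  simp only [Function.comp_apply, dualTensorHomEquiv, LinearEquiv.ofBijective_apply]
  rw [dualTensorHom_comm_tprod_dual, dualTensorHom_comm_coevaluation_one]
  ext
  simp

end Representation

namespace Rep

variable {k G : Type*} [Field k] [Group G] (u : Rep k G)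

noncomputable def coevaluation [FiniteDimensional k u.V] :
    𝟙_ (Rep k G) ⟶ u ⊗ of u.ρ.dual :=
  ofHom ⟨_root_.coevaluation k u.V, fun g => by
    ext
    simpa using (u.ρ.tprod_dual_apply_coevaluation_one g).symm⟩

noncomputable def contractRight : u ⊗ of u.ρ.dual ⟶ 𝟙_ (Rep k G) :=
  ofHom ⟨_root_.contractRight k u.V, fun g => by
    ext v f
    simp [Representation.tprod_apply, Module.Dual.transpose_apply]⟩

theorem coevaluation_comp_contractRight [FiniteDimensional k u.V] :
    u.coevaluation ≫ u.contractRight = (Module.finrank k u.V : k) • 𝟙 _ := by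
  ext
  simp [coevaluation, contractRight, contractRight_coevaluation_one, smul_hom]

end Rep

section IsRelProjective

variable {k G : Type} [Field k] [Group G]

theorem IsRelProjective.of_retract {u w X : Rep k G} (e : Retract u w)
    (hX : IsRelProjective u X) : IsRelProjective w X := by
  obtain ⟨Y, i, r, h⟩ := hX
  let e' := (Retract.mk i r h).trans (e.map (tensorRight Y))
  exact ⟨Y, e'.i, e'.r, e'.retract⟩

theorem isRelProjective_of_retract_unit {u D : Rep k G} (e : Retract (𝟙_ (Rep k G)) (u ⊗ D))
    (X : Rep k G) : IsRelProjective u X := by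
  let e' := ((Retract.ofIso (λ_ X).symm).trans (e.map (tensorRight X))).trans
    (Retract.ofIso (α_ u D X))
  exact ⟨D ⊗ X, e'.i, e'.r, e'.retract⟩

theorem isRelProjective_of_finrank_ne_zero (u : Rep k G) [FiniteDimensional k u.V]
    (hu : (Module.finrank k u.V : k) ≠ 0) (X : Rep k G) : IsRelProjective u X :=
  isRelProjective_of_retract_unit
    ⟨(Module.finrank k u.V : k)⁻¹ • u.coevaluation, u.contractRight, by
      rw [Linear.smul_comp, u.coevaluation_comp_contractRight, smul_smul, inv_mul_cancel₀ hu,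
        one_smul]⟩ X

end IsRelProjective

theorem isRelProjective_of_summand_dim_coprime (k G : Type) (p : ℕ) [Field k] [CharP k p]
    [Group G]
    (w u : Rep k G) [FiniteDimensional k u.V]
    (hu : ∃ (i : u ⟶ w) (r : w ⟶ u), i ≫ r = 𝟙 u)
    (hdim : ¬ (p ∣ Module.finrank k u.V))
    (X : Rep k G) :
    IsRelProjective w X := by
  obtain ⟨i, r, hir⟩ := hu
  have hdim_ne_zero : (Module.finrank k u.V : k) ≠ 0 := by
    rwa [Ne, CharP.cast_eq_zero_iff k p]
  exact (isRelProjective_of_finrank_ne_zero u hdim_ne_zero X).of_retract ⟨i, r, hir⟩
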